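/- For every real a with 0.99 ≤ a ≤ 1, one has h₁(a) ≥ 0.83, where h₁(a) = (1 - (2·arccos(a) + arccos(2a-1))/(2π))/a. -/

import Mathlib

/-- `h₁(a) = (1 - (2·arccos a + arccos(2a-1))/(2π))/a`. -/
noncomputable def h₁ (a : ℝ) : ℝ :=
  (1 - (2 * Real.arccos a + Real.arccos (2 * a - 1)) / (2 * Real.pi)) / a

/-! Jordan's bound `cos t ≤ 1 - 2t²/π²` on `[0, π]`, read at `t = arccos x`, gives
`arccos x ≤ π √((1 - x)/2)`. Since `arccos` is antitone, for `a ≥ 0.99` the numerator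
`2 arccos a + arccos (2a - 1)` is then at most `(2 √0.005 + √0.01) π < 0.2416 π`, so
`h₁ a ≥ 1 - 0.1208 > 0.83`. -/

open Real

lemma Real.arccos_le_pi_mul_sqrt {x : ℝ} (hx₁ : -1 ≤ x) (hx₂ : x ≤ 1) :
    arccos x ≤ π * √((1 - x) / 2) := by
  have hjordan : cos (arccos x) ≤ 1 - 2 / π ^ 2 * arccos x ^ 2 :=
    cos_le_one_sub_mul_cos_sq (by rw [abs_of_nonneg (arccos_nonneg x)]; exact arccos_le_pi x)
  rw [cos_arccos hx₁ hx₂] at hjordan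
  have hsq : arccos x ^ 2 ≤ π ^ 2 * ((1 - x) / 2) := by
    rw [div_mul_eq_mul_div, le_sub_comm, div_le_iff₀ (by positivity)] at hjordan
    linarith
  rw [← sqrt_sq pi_pos.le, ← sqrt_mul (sq_nonneg π)]
  exact (le_sqrt (arccos_nonneg x) (by positivity)).2 hsq

lemma two_mul_arccos_add_arccos_two_mul_sub_one_le {a : ℝ} (ha : 0.99 ≤ a) :
    2 * arccos a + arccos (2 * a - 1) ≤ 0.2416 * π := by
  have h₁ : arccos a ≤ 0.0708 * π :=
    calc arccos a ≤ arccos 0.99 := arccos_le_arccos ha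
      _ ≤ π * √((1 - 0.99) / 2) := arccos_le_pi_mul_sqrt (by norm_num) (by norm_num)
      _ ≤ 0.0708 * π := by
        rw [mul_comm]
        gcongr
        exact (sqrt_le_left (by norm_num)).2 (by norm_num)
  have h₂ : arccos (2 * a - 1) ≤ 0.1 * π :=
    calc arccos (2 * a - 1) ≤ arccos 0.98 := arccos_le_arccos (by linarith)
      _ ≤ π * √((1 - 0.98) / 2) := arccos_le_pi_mul_sqrt (by norm_num) (by norm_num)
      _ ≤ 0.1 * π := by
        rw [mul_comm]
        gcongr
        exact (sqrt_le_left (by norm_num)).2 (by norm_num)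
  linarith

/-- For `0.99 ≤ a ≤ 1`, `h₁(a) ≥ 0.83`. -/
theorem stmt18 (a : ℝ) (h0 : (0.99 : ℝ) ≤ a) (h1 : a ≤ 1) : h₁ a ≥ (0.83 : ℝ) := by
  have hratio : (2 * arccos a + arccos (2 * a - 1)) / (2 * π) ≤ 0.1208 := by
    rw [div_le_iff₀ (by positivity)]
    linarith [two_mul_arccos_add_arccos_two_mul_sub_one_le h0]
  rw [h₁, ge_iff_le, le_div_iff₀ (by linarith)]
  linarith
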